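/- Let (L_i, u_{ij}) and (X_i, v_{ij}) be inverse systems of topological spaces over a directed set I, and p : (L_i) → (X_i) a level morphism such that each p_i : L_i → X_i is a lifting projection. Then the limit map lim p_i : lim L_i → lim X_i is a lifting projection. -/

import Mathlib

/-! A lifting projection is a map with unique path lifting in which the lift depends
continuously on the path and the starting point. Lifts in a product can be taken coordinatewise,
and lifts in a subspace pair `(s, t)` are the ambient ones as soon as these stay in `s`. For
inverse limits they do: if a path `γ` in `∏ Lᵢ` covers a path of threads and starts at a thread,
then `uᵢⱼ ∘ γⱼ` and `γᵢ` lift the same path of `Xᵢ` from the same point, so they agree. -/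


open unitInterval

universe u v

variable {L X K B : Type u} [TopologicalSpace L] [TopologicalSpace X] [TopologicalSpace K]
  [TopologicalSpace B]

/-- `X^I ⊓ L`: pairs `(γ, l)` of a path in `X` and a point of `L` with `p l = γ 0`,
topologized as a subspace of `C(I, X) × L` (compact-open topology on path spaces). -/
def Sqcap (p : L → X) : Type u :=
  {q : C(I, X) × L // p q.2 = q.1 0}

instance (p : L → X) : TopologicalSpace (Sqcap p) := by unfold Sqcap; infer_instance

/-- The canonical map `p̄ : L^I → X^I ⊓ L`, `γ ↦ (p ∘ γ, γ 0)`. -/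
def pbar {p : L → X} (hp : Continuous p) : C(I, L) → Sqcap p :=
  fun γ => ⟨(⟨p ∘ γ, hp.comp γ.continuous⟩, γ 0), rfl⟩

/-- A lifting projection is a continuous map `p` such that `p̄` is a homeomorphism. -/
def IsLiftingProjection (p : L → X) : Prop :=
  ∃ hp : Continuous p, IsHomeomorph (pbar hp)

/-- A Hurewicz fibration: a continuous map with the homotopy lifting property with
respect to all spaces. -/
def IsHurewiczFibration (p : L → X) : Prop :=
  Continuous p ∧
    ∀ (Y : Type u) (_ : TopologicalSpace Y) (H : Y × I → X) (h₀ : Y → L),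
      Continuous H → Continuous h₀ → (∀ y, p (h₀ y) = H (y, 0)) →
        ∃ G : Y × I → L, Continuous G ∧ (∀ z, p (G z) = H z) ∧ (∀ y, G (y, 0) = h₀ y)

universe w

def Sqcap.map {M Y : Type w} [TopologicalSpace M] [TopologicalSpace Y] {p : L → X} {p' : M → Y}
    (f : C(X, Y)) (g : L → M) (h : ∀ l, p' (g l) = f (p l)) (q : Sqcap p) : Sqcap p' :=
  ⟨(f.comp q.1.1, g q.1.2), (h _).trans (congrArg f q.2)⟩

theorem Sqcap.continuous_map {M Y : Type w} [TopologicalSpace M] [TopologicalSpace Y]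
    {p : L → X} {p' : M → Y} (f : C(X, Y)) {g : L → M}
    (hg : Continuous g) (h : ∀ l, p' (g l) = f (p l)) : Continuous (Sqcap.map f g h) :=
  (((ContinuousMap.continuous_postcomp f).comp (continuous_fst.comp continuous_subtype_val)).prodMk
    (hg.comp (continuous_snd.comp continuous_subtype_val))).subtype_mk _

namespace IsLiftingProjection

variable {p : L → X}

theorem continuous_pbar (hp : Continuous p) : Continuous (pbar hp) :=
  ((ContinuousMap.continuous_postcomp ⟨p, hp⟩).prodMk (continuous_eval_const 0)).subtype_mk _

theorem pbar_eq_iff (hp : Continuous p) {γ : C(I, L)} {q : Sqcap p} :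
    pbar hp γ = q ↔ (∀ t, p (γ t) = q.1.1 t) ∧ γ 0 = q.1.2 := by
  refine ⟨fun h => ⟨fun t => congrArg (fun z : Sqcap p => z.1.1 t) h,
    congrArg (fun z : Sqcap p => z.1.2) h⟩, fun ⟨h₁, h₀⟩ => ?_⟩
  exact Subtype.ext (Prod.ext (ContinuousMap.ext h₁) h₀)

theorem of_lift (hp : Continuous p) (lift : Sqcap p → C(I, L)) (hlift : Continuous lift)
    (pbar_lift : ∀ q, pbar hp (lift q) = q) (lift_pbar : ∀ γ, lift (pbar hp γ) = γ) :
    IsLiftingProjection p :=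
  ⟨hp, (Homeomorph.mk ⟨pbar hp, lift, lift_pbar, pbar_lift⟩ (continuous_pbar hp)
    hlift).isHomeomorph⟩

theorem continuous (hp : IsLiftingProjection p) : Continuous p := hp.1

noncomputable def lift (hp : IsLiftingProjection p) : Sqcap p → C(I, L) :=
  (hp.2.homeomorph _).symm

theorem continuous_lift (hp : IsLiftingProjection p) : Continuous hp.lift :=
  (hp.2.homeomorph _).symm.continuous

theorem pbar_lift (hp : IsLiftingProjection p) (q : Sqcap p) : pbar hp.1 (hp.lift q) = q :=
  (hp.2.homeomorph _).apply_symm_apply q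

theorem lift_pbar (hp : IsLiftingProjection p) (γ : C(I, L)) : hp.lift (pbar hp.1 γ) = γ :=
  (hp.2.homeomorph _).symm_apply_apply γ

theorem apply_lift (hp : IsLiftingProjection p) (q : Sqcap p) (t : I) :
    p (hp.lift q t) = q.1.1 t :=
  ((pbar_eq_iff hp.1).1 (hp.pbar_lift q)).1 t

theorem lift_zero (hp : IsLiftingProjection p) (q : Sqcap p) : hp.lift q 0 = q.1.2 :=
  ((pbar_eq_iff hp.1).1 (hp.pbar_lift q)).2

theorem eq_of_comp_eq (hp : IsLiftingProjection p) {γ₁ γ₂ : C(I, L)}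
    (h : ∀ t, p (γ₁ t) = p (γ₂ t)) (h₀ : γ₁ 0 = γ₂ 0) : γ₁ = γ₂ :=
  hp.2.injective <| (pbar_eq_iff hp.1).2 ⟨h, h₀⟩

theorem pi {ι : Type v} {E F : ι → Type u} [∀ i, TopologicalSpace (E i)]
    [∀ i, TopologicalSpace (F i)] {p : ∀ i, E i → F i} (hp : ∀ i, IsLiftingProjection (p i)) :
    IsLiftingProjection (fun (l : ∀ i, E i) i => p i (l i)) := by
  have hc : Continuous (fun (l : ∀ i, E i) i => p i (l i)) :=
    continuous_pi fun i => (hp i).continuous.comp (continuous_apply i)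
  let coord (i : ι) : Sqcap (fun (l : ∀ i, E i) i => p i (l i)) → Sqcap (p i) :=
    Sqcap.map (ContinuousMap.eval i) (Function.eval i) fun _ => rfl
  have hcoord (i : ι) : Continuous (coord i) := Sqcap.continuous_map _ (continuous_apply i) _
  refine of_lift hc (fun q => .pi fun i => (hp i).lift (coord i q)) ?_ ?_ ?_
  · exact ContinuousMap.continuous_of_continuous_uncurry _ <| continuous_pi fun i =>
      continuous_eval.comp ((((hp i).continuous_lift.comp (hcoord i)).comp continuous_fst).prodMk
        continuous_snd)
  · exact fun q => (pbar_eq_iff hc).2 ⟨fun t => funext fun i => (hp i).apply_lift _ t,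
      funext fun i => (hp i).lift_zero _⟩
  · intro γ
    ext t i
    exact congrArg (· t) ((hp i).lift_pbar ((ContinuousMap.eval i).comp γ))

theorem restrict (hp : IsLiftingProjection p) {s : Set L} {t : Set X} (hst : Set.MapsTo p s t)
    (hpath : ∀ γ : C(I, L), γ 0 ∈ s → (∀ τ, p (γ τ) ∈ t) → ∀ τ, γ τ ∈ s) :
    IsLiftingProjection (hst.restrict p s t) := by
  have hc : Continuous (hst.restrict p s t) := hp.continuous.restrict hst
  let val : Sqcap (hst.restrict p s t) → Sqcap p :=
    Sqcap.map ⟨Subtype.val, continuous_subtype_val⟩ Subtype.val fun _ => rfl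
  have hval : Continuous val := Sqcap.continuous_map _ continuous_subtype_val _
  have lift_mem (q : Sqcap (hst.restrict p s t)) (τ : I) : hp.lift (val q) τ ∈ s :=
    hpath _ (by rw [hp.lift_zero]; exact q.1.2.2)
      (fun τ => by rw [hp.apply_lift]; exact (q.1.1 τ).2) τ
  refine of_lift hc (fun q => ⟨fun τ => ⟨hp.lift (val q) τ, lift_mem q τ⟩,
    (hp.lift (val q)).continuous.subtype_mk _⟩) ?_ ?_ ?_
  · exact ContinuousMap.continuous_of_continuous_uncurry _ <| Continuous.subtype_mk
      (continuous_eval.comp (((hp.continuous_lift.comp hval).comp continuous_fst).prodMk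
        continuous_snd)) _
  · exact fun q => (pbar_eq_iff hc).2 ⟨fun τ => Subtype.ext (hp.apply_lift _ τ),
      Subtype.ext (hp.lift_zero _)⟩
  · intro γ
    ext τ
    exact congrArg (· τ) (hp.lift_pbar ((ContinuousMap.mk Subtype.val).comp γ))

end IsLiftingProjection

/-- The inverse limit of a level morphism of inverse systems of
topological spaces, all of whose levels are lifting projections, is a lifting
projection between the inverse limits. -/
theorem isLiftingProjection_invLimit {ι : Type v} [Preorder ι]
    {Lf Xf : ι → Type u}
    [∀ i, TopologicalSpace (Lf i)] [∀ i, TopologicalSpace (Xf i)]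
    (uL : ∀ i j, i ≤ j → Lf j → Lf i) (uX : ∀ i j, i ≤ j → Xf j → Xf i)
    (huL : ∀ i j (h : i ≤ j), Continuous (uL i j h))
    (p : ∀ i, Lf i → Xf i) (hp : ∀ i, IsLiftingProjection (p i))
    (hcomm : ∀ i j (h : i ≤ j) (l : Lf j), uX i j h (p j l) = p i (uL i j h l)) :
    IsLiftingProjection
      (fun l : {l : ∀ i, Lf i // ∀ i j (h : i ≤ j), uL i j h (l j) = l i} =>
        (⟨fun i => p i (l.1 i), fun i j h => by
            rw [hcomm i j h, l.2 i j h]⟩ :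
          {x : ∀ i, Xf i // ∀ i j (h : i ≤ j), uX i j h (x j) = x i})) := by
  let limL : Set (∀ i, Lf i) := {l | ∀ i j (h : i ≤ j), uL i j h (l j) = l i}
  let limX : Set (∀ i, Xf i) := {x | ∀ i j (h : i ≤ j), uX i j h (x j) = x i}
  have hmaps : Set.MapsTo (fun l i => p i (l i)) limL limX := fun l hl i j h =>
    (hcomm i j h (l j)).trans (congrArg (p i) (hl i j h))
  have hpath (γ : C(I, ∀ i, Lf i)) (h₀ : γ 0 ∈ limL) (hX : ∀ τ, (fun i => p i (γ τ i)) ∈ limX)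
      (τ : I) : γ τ ∈ limL := by
    intro i j h
    have hlift : (⟨uL i j h, huL i j h⟩ : C(Lf j, Lf i)).comp ((ContinuousMap.eval j).comp γ) =
        (ContinuousMap.eval i).comp γ :=
      (hp i).eq_of_comp_eq (fun τ => (hcomm i j h _).symm.trans (hX τ i j h)) (h₀ i j h)
    exact congrArg (· τ) hlift
  exact (IsLiftingProjection.pi hp).restrict hmaps hpath
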